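/- Let d, n ≥ 1, ε > 0, and let 𝐀 : ℝ × ℝᵈ → Mₙ be twice continuously differentiable. Write ∂ₜ𝐀 for the partial derivative in the first (time) variable and ∂ᵢ𝐀 for the partial derivative in the i-th spatial coordinate. If 𝐀 satisfies the matrix-valued Allen–Cahn equation ∂ₜ𝐀 = Σᵢ₌₁ᵈ ∂ᵢ∂ᵢ𝐀 − ε⁻²(𝐀𝐀ᵀ𝐀 − 𝐀) at every point, then at every point it also satisfies the commutator-form equation [∂ₜ𝐀, 𝐀] = Σᵢ₌₁ᵈ ∂ᵢ[∂ᵢ𝐀, 𝐀], i.e. ∂ₜ𝐀 𝐀ᵀ − 𝐀 (∂ₜ𝐀)ᵀ = Σᵢ₌₁ᵈ ∂ᵢ(∂ᵢ𝐀 𝐀ᵀ − 𝐀 (∂ᵢ𝐀)ᵀ). -/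

import Mathlib

open Matrix

attribute [local instance] Matrix.frobeniusNormedAddCommGroup Matrix.frobeniusNormedSpace

/-- Time derivative `∂ₜ𝐀` of a matrix field `𝐀 : ℝ × ℝᵈ → Mₙ`. -/
noncomputable def Dt {d n : ℕ} (A : ℝ × (Fin d → ℝ) → Matrix (Fin n) (Fin n) ℝ) :
    ℝ × (Fin d → ℝ) → Matrix (Fin n) (Fin n) ℝ :=
  fun p => fderiv ℝ A p (1, 0)

/-- Spatial derivative `∂ᵢ𝐀` of a matrix field `𝐀 : ℝ × ℝᵈ → Mₙ`. -/
noncomputable def Di {d n : ℕ} (i : Fin d) (A : ℝ × (Fin d → ℝ) → Matrix (Fin n) (Fin n) ℝ) :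
    ℝ × (Fin d → ℝ) → Matrix (Fin n) (Fin n) ℝ :=
  fun p => fderiv ℝ A p (0, Pi.single i 1)

attribute [local instance] Matrix.frobeniusNormedRing Matrix.frobeniusNormedAlgebra

/-- Transpose as a continuous linear map. -/
noncomputable def Tr (n : ℕ) :
    Matrix (Fin n) (Fin n) ℝ →L[ℝ] Matrix (Fin n) (Fin n) ℝ :=
  LinearMap.toContinuousLinearMap
    (Matrix.transposeLinearEquiv (Fin n) (Fin n) ℝ ℝ).toLinearMap

@[simp] lemma Tr_apply {n : ℕ} (M : Matrix (Fin n) (Fin n) ℝ) : Tr n M = Mᵀ := rfl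

lemma key {d n : ℕ} (A : ℝ × (Fin d → ℝ) → Matrix (Fin n) (Fin n) ℝ)
    (hA : ContDiff ℝ 2 A) (i : Fin d) (p : ℝ × (Fin d → ℝ)) :
    Di i (fun q => Di i A q * (A q)ᵀ - A q * (Di i A q)ᵀ) p =
      Di i (Di i A) p * (A p)ᵀ - A p * (Di i (Di i A) p)ᵀ := by
  set v : ℝ × (Fin d → ℝ) := (0, Pi.single i 1) with hv
  have hf : ContDiff ℝ 1 (Di i A) := by
    letI : NormedAddCommGroup (ℝ × (Fin d → ℝ) →L[ℝ] Matrix (Fin n) (Fin n) ℝ) :=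
      ContinuousLinearMap.toNormedAddCommGroup
    letI : NormedSpace ℝ (ℝ × (Fin d → ℝ) →L[ℝ] Matrix (Fin n) (Fin n) ℝ) :=
      ContinuousLinearMap.toNormedSpace
    have h1 : ContDiff ℝ 1 (fderiv ℝ A) := hA.fderiv_right (m := 1) (by norm_num)
    exact h1.clm_apply contDiff_const
  have hAd : HasFDerivAt A (fderiv ℝ A p) p :=
    (hA.differentiable (by norm_num)).differentiableAt.hasFDerivAt
  have hfd : HasFDerivAt (Di i A) (fderiv ℝ (Di i A) p) p :=
    (hf.differentiable one_ne_zero).differentiableAt.hasFDerivAt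
  have hAT : HasFDerivAt (fun q => (A q)ᵀ) ((Tr n).comp (fderiv ℝ A p)) p :=
    (Tr n).hasFDerivAt.comp p hAd
  have hfT : HasFDerivAt (fun q => (Di i A q)ᵀ) ((Tr n).comp (fderiv ℝ (Di i A) p)) p :=
    (Tr n).hasFDerivAt.comp p hfd
  have h1 : HasFDerivAt (fun q => Di i A q * (A q)ᵀ)
      (Di i A p • ((Tr n).comp (fderiv ℝ A p)) +
        (fderiv ℝ (Di i A) p).smulRight (A p)ᵀ) p := hfd.mul' hAT
  have h2 : HasFDerivAt (fun q => A q * (Di i A q)ᵀ)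
      (A p • ((Tr n).comp (fderiv ℝ (Di i A) p)) +
        (fderiv ℝ A p).smulRight (Di i A p)ᵀ) p := hAd.mul' hfT
  have h3 : HasFDerivAt (fun q => Di i A q * (A q)ᵀ - A q * (Di i A q)ᵀ) _ p := (h1.sub h2)
  have := h3.fderiv
  show fderiv ℝ (fun q => Di i A q * (A q)ᵀ - A q * (Di i A q)ᵀ) p v = _
  rw [this]
  have hAv : fderiv ℝ A p v = Di i A p := rfl
  have hfv : fderiv ℝ (Di i A) p v = Di i (Di i A) p := rfl
  show (Di i A p * (Di i A p)ᵀ + Di i (Di i A) p * (A p)ᵀ) -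
    (A p * (Di i (Di i A) p)ᵀ + Di i A p * (Di i A p)ᵀ) = _
  noncomm_ring

theorem stmt18 {d n : ℕ} (hd : 1 ≤ d) (hn : 1 ≤ n) (ε : ℝ) (hε : 0 < ε)
    (A : ℝ × (Fin d → ℝ) → Matrix (Fin n) (Fin n) ℝ)
    (hA : ContDiff ℝ 2 A)
    (heq : ∀ p, Dt A p =
      (∑ i : Fin d, Di i (Di i A) p) - (ε ^ 2)⁻¹ • (A p * (A p)ᵀ * A p - A p)) :
    ∀ p, Dt A p * (A p)ᵀ - A p * (Dt A p)ᵀ =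
      ∑ i : Fin d, Di i (fun q => Di i A q * (A q)ᵀ - A q * (Di i A q)ᵀ) p := by
  intro p
  have hk : ∀ i : Fin d, Di i (fun q => Di i A q * (A q)ᵀ - A q * (Di i A q)ᵀ) p =
      Di i (Di i A) p * (A p)ᵀ - A p * (Di i (Di i A) p)ᵀ := fun i => key A hA i p
  rw [heq p, Finset.sum_congr rfl (fun i _ => hk i)]
  set S : Matrix (Fin n) (Fin n) ℝ := ∑ i : Fin d, Di i (Di i A) p with hS
  have hST : (∑ i : Fin d, (Di i (Di i A) p)ᵀ) = Sᵀ := (Matrix.transpose_sum _ _).symm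
  rw [Finset.sum_sub_distrib, ← Finset.sum_mul, ← Finset.mul_sum, hST, ← hS]
  simp only [Matrix.transpose_sub, Matrix.transpose_smul, Matrix.transpose_mul,
    Matrix.transpose_transpose, Matrix.sub_mul, Matrix.mul_sub, Matrix.smul_mul,
    Matrix.mul_smul]
  abel_nf
  ring_nf
  noncomm_ring
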